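/- arXiv:math/0512524 — 2 statements merged into one kernel-verified Lean document; each statement's English description precedes it below -/
import Mathlib

section
/- Let U be a sub-Markovian resolvent of kernels, β>0, and ξ, η two U-excessive measures with ξ purely excessive. If ξ − ξ∘βU_β ≤ η − η∘βU_β (as positive measures), then ξ ≤ η. -/
open MeasureTheory ProbabilityTheory ENNReal Set Filter

variable {E : Type*} [MeasurableSpace E]

/-- The action of the kernel `U α` on nonnegative measurable functions. -/
noncomputable def resOp (U : ℝ → ProbabilityTheory.Kernel E E) (α : ℝ)
    (f : E → ℝ≥0∞) (x : E) : ℝ≥0∞ := ∫⁻ y, f y ∂(U α x)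

/-- A sub-Markovian resolvent of kernels: `α U_α 1 ≤ 1` and the resolvent equation
`U_α = U_β + (β-α) U_α U_β` for `0 < α ≤ β`. -/
def IsSubMarkovResolvent (U : ℝ → ProbabilityTheory.Kernel E E) : Prop :=
  (∀ α : ℝ, 0 < α → ∀ x : E, ENNReal.ofReal α * (U α x) Set.univ ≤ 1) ∧
  (∀ α β : ℝ, 0 < α → α ≤ β → ∀ f : E → ℝ≥0∞, Measurable f → ∀ x : E,
    resOp U α f x = resOp U β f x + ENNReal.ofReal (β - α) * resOp U α (resOp U β f) x)

/-- The initial kernel `U = sup_{α>0} U_α` acting on functions. -/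
noncomputable def iniOp (U : ℝ → ProbabilityTheory.Kernel E E) (f : E → ℝ≥0∞) (x : E) : ℝ≥0∞ :=
  ⨆ (α : ℝ) (_ : 0 < α), resOp U α f x

/-- `s` is `U`-supermedian: `α U_α s ≤ s` for all `α > 0`. -/
def IsSupermedian (U : ℝ → ProbabilityTheory.Kernel E E) (s : E → ℝ≥0∞) : Prop :=
  ∀ α : ℝ, 0 < α → ∀ x, ENNReal.ofReal α * resOp U α s x ≤ s x

/-- The regularization `ŝ(x) = sup_{α>0} α U_α s (x)`. -/
noncomputable def hatOp (U : ℝ → ProbabilityTheory.Kernel E E) (s : E → ℝ≥0∞) (x : E) : ℝ≥0∞ :=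
  ⨆ (α : ℝ) (_ : 0 < α), ENNReal.ofReal α * resOp U α s x

/-- `s` is `U`-excessive: supermedian and `sup_{α>0} α U_α s = s`. -/
def IsExcessiveFn (U : ℝ → ProbabilityTheory.Kernel E E) (s : E → ℝ≥0∞) : Prop :=
  IsSupermedian U s ∧ ∀ x, hatOp U s x = s x

/-- The shifted resolvent `U_β = (U_{β+α})_{α>0}`. -/
def shiftRes (U : ℝ → ProbabilityTheory.Kernel E E) (β : ℝ) :
    ℝ → ProbabilityTheory.Kernel E E := fun α => U (β + α)

/-- `ξ` is a `U`-excessive measure: `ξ ∘ (α U_α) ≤ ξ` for all `α > 0`. -/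
def IsExcessiveMeas (U : ℝ → ProbabilityTheory.Kernel E E) (ξ : Measure E) : Prop :=
  ∀ α : ℝ, 0 < α → ENNReal.ofReal α • ξ.bind (U α) ≤ ξ

/-- The measure `μ ∘ U`, where `U` is the initial kernel `sup_{α>0} U_α`. -/
noncomputable def potMeas (U : ℝ → ProbabilityTheory.Kernel E E) (μ : Measure E) : Measure E :=
  ⨆ (α : ℝ) (_ : 0 < α), μ.bind (U α)

/-- `ξ` is purely excessive: excessive and `inf_{α>0} ξ ∘ (α U_α) = 0`. -/
def IsPurelyExcessiveMeas (U : ℝ → ProbabilityTheory.Kernel E E) (ξ : Measure E) : Prop :=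
  IsExcessiveMeas U ξ ∧ ∀ s : Set E, MeasurableSet s →
    (⨅ (α : ℝ) (_ : 0 < α), (ENNReal.ofReal α • ξ.bind (U α)) s) = 0

/-- The set of non-branch points with respect to `U`. -/
def nonBranch (U : ℝ → ProbabilityTheory.Kernel E E) : Set E :=
  {x | (∀ s t : E → ℝ≥0∞, IsExcessiveFn U s → IsExcessiveFn U t →
      hatOp U (fun y => min (s y) (t y)) x = min (s x) (t x)) ∧
    hatOp U (fun _ => (1 : ℝ≥0∞)) x = 1}

/-!
Write `P = βU_β` for the operator `μ ↦ β • (U_β ∘ₘ μ)` on measures. By σ-finiteness,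
`ξ = ν + Pξ` and `η = ρ + Pη` with `ν = ξ - Pξ ≤ ρ = η - Pη`. Unrolling these identities,
`ξ = ∑_{k<n} Pᵏν + Pⁿξ` and `∑_{k<n} Pᵏν ≤ ∑_{k<n} Pᵏρ ≤ η`, so `ξ ≤ η + Pⁿξ` for every `n`.

It remains to see that `inf_n Pⁿξ = 0` setwise, which is where pure excessiveness enters.
For `0 < α ≤ β`, iterating the resolvent equation gives
`αU_α ≥ ∑_k α (β - α)ᵏ U_β^(k+1) = ∑_k wₖ P^(k+1)` with `∑_k wₖ = 1`, hence
`inf_n Pⁿξ ≤ ξ ∘ αU_α`; and `α ↦ ξ ∘ αU_α` is increasing, so the bound holds for all `α > 0`.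
-/

theorem Module.End.eq_sum_pow_add_pow {R M : Type*} [Semiring R] [AddCommMonoid M] [Module R M]
    (f : Module.End R M) {x y : M} (h : x = y + f x) (n : ℕ) :
    x = ∑ k ∈ Finset.range n, (f ^ k) y + (f ^ n) x := by
  induction n with
  | zero => simp
  | succ n ih =>
    rw [Finset.sum_range_succ, pow_succ, Module.End.mul_apply, add_assoc, ← map_add, ← h]
    exact ih

namespace MeasureTheory.Measure

variable {α β : Type*} {mα : MeasurableSpace α} {mβ : MeasurableSpace β}

theorem sub_add_cancel_of_le_of_sigmaFinite {μ ν : Measure α} [SigmaFinite μ] (h : ν ≤ μ) :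
    μ - ν + ν = μ := by
  refine (ext_iff_of_iUnion_eq_univ (iUnion_spanningSets μ)).2 fun n => ?_
  have hνμ : ν.restrict (spanningSets μ n) ≤ μ.restrict (spanningSets μ n) :=
    restrict_mono subset_rfl h
  have : IsFiniteMeasure (μ.restrict (spanningSets μ n)) :=
    isFiniteMeasure_restrict.2 (measure_spanningSets_lt_top μ n).ne
  have : IsFiniteMeasure (ν.restrict (spanningSets μ n)) := isFiniteMeasure_of_le _ hνμ
  rw [restrict_add, restrict_sub_eq_restrict_sub_restrict (measurableSet_spanningSets μ n),
    sub_add_cancel_of_le hνμ]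

@[gcongr]
theorem comp_mono (κ : Kernel α β) {μ ν : Measure α} (h : μ ≤ ν) : κ ∘ₘ μ ≤ κ ∘ₘ ν :=
  le_iff.2 fun s hs => by
    rw [bind_apply hs κ.aemeasurable, bind_apply hs κ.aemeasurable]
    exact lintegral_mono' h le_rfl

theorem le_of_eq_add_of_iInf_pow_apply_eq_zero {T : Module.End ℝ≥0∞ (Measure α)} (hT : Monotone T)
    {ξ η ν ρ : Measure α} (hξ : ξ = ν + T ξ) (hη : η = ρ + T η) (hνρ : ν ≤ ρ)
    (hvanish : ∀ s, MeasurableSet s → ⨅ n, (T ^ n) ξ s = 0) : ξ ≤ η := by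
  have hsum : ∀ n, ∑ k ∈ Finset.range n, (T ^ k) ν ≤ η := fun n =>
    calc ∑ k ∈ Finset.range n, (T ^ k) ν
        ≤ ∑ k ∈ Finset.range n, (T ^ k) ρ := Finset.sum_le_sum fun k _ => by
          rw [Module.End.pow_apply, Module.End.pow_apply]
          exact hT.iterate k hνρ
      _ ≤ ∑ k ∈ Finset.range n, (T ^ k) ρ + (T ^ n) η := Measure.le_add_right le_rfl
      _ = η := (T.eq_sum_pow_add_pow hη n).symm
  refine le_iff.2 fun s hs => ?_
  have hξn : ∀ n, ξ s ≤ η s + (T ^ n) ξ s := fun n => by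
    conv_lhs => rw [T.eq_sum_pow_add_pow hξ n]
    rw [add_apply]
    exact add_le_add (hsum n s) le_rfl
  calc ξ s ≤ ⨅ n, (η s + (T ^ n) ξ s) := le_iInf hξn
    _ = η s := by rw [← ENNReal.add_iInf, hvanish s hs, add_zero]

end MeasureTheory.Measure

namespace ProbabilityTheory.Kernel

variable {α β : Type*} {mα : MeasurableSpace α} {mβ : MeasurableSpace β}

noncomputable def compMeasureₗ (κ : Kernel α β) : Measure α →ₗ[ℝ≥0∞] Measure β where
  toFun μ := κ ∘ₘ μ
  map_add' _ _ := Measure.comp_add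
  map_smul' _ _ := Measure.comp_smul _

theorem monotone_compMeasureₗ (κ : Kernel α β) : Monotone κ.compMeasureₗ :=
  fun _ _ h => Measure.comp_mono κ h

end ProbabilityTheory.Kernel

namespace IsSubMarkovResolvent

variable {U : ℝ → Kernel E E} {α β : ℝ}

theorem apply_eq_add_mul_comp_apply (hU : IsSubMarkovResolvent U) (hα : 0 < α) (hαβ : α ≤ β)
    (x : E) {s : Set E} (hs : MeasurableSet s) :
    U α x s = U β x s + ENNReal.ofReal (β - α) * (U β ∘ₖ U α) x s := by
  have h := hU.2 α β hα hαβ _ (measurable_one.indicator hs) x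
  simpa [resOp, lintegral_indicator_one hs, Kernel.comp_apply' _ _ _ hs] using h

theorem comp_eq_add_smul_comp (hU : IsSubMarkovResolvent U) (hα : 0 < α) (hαβ : α ≤ β)
    (μ : Measure E) :
    U α ∘ₘ μ = U β ∘ₘ μ + ENNReal.ofReal (β - α) • (U β ∘ₘ (U α ∘ₘ μ)) := by
  ext s hs
  rw [Measure.comp_assoc]
  simp only [Measure.add_apply, Measure.smul_apply, smul_eq_mul,
    Measure.bind_apply hs (Kernel.aemeasurable _)]
  rw [← lintegral_const_mul _ ((U β ∘ₖ U α).measurable_coe hs),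
    ← lintegral_add_left ((U β).measurable_coe hs)]
  exact lintegral_congr fun x => hU.apply_eq_add_mul_comp_apply hα hαβ x hs

theorem smul_comp_le_smul_comp (hU : IsSubMarkovResolvent U) (hα : 0 < α) (hαβ : α ≤ β)
    {ξ : Measure E} (hξ : ENNReal.ofReal α • (U α ∘ₘ ξ) ≤ ξ) :
    ENNReal.ofReal α • (U α ∘ₘ ξ) ≤ ENNReal.ofReal β • (U β ∘ₘ ξ) :=
  calc ENNReal.ofReal α • (U α ∘ₘ ξ)
      = ENNReal.ofReal α • (U β ∘ₘ ξ)
        + ENNReal.ofReal (β - α) • (U β ∘ₘ (ENNReal.ofReal α • (U α ∘ₘ ξ))) := by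
        rw [Measure.comp_smul, smul_comm _ (ENNReal.ofReal α), ← smul_add,
          ← hU.comp_eq_add_smul_comp hα hαβ]
    _ ≤ ENNReal.ofReal α • (U β ∘ₘ ξ) + ENNReal.ofReal (β - α) • (U β ∘ₘ ξ) := by gcongr
    _ = ENNReal.ofReal β • (U β ∘ₘ ξ) := by
        rw [← add_smul, ← ENNReal.ofReal_add hα.le (sub_nonneg.2 hαβ), add_sub_cancel]

theorem sum_smul_pow_le_comp (hU : IsSubMarkovResolvent U) (hα : 0 < α) (hαβ : α ≤ β)
    (μ : Measure E) (n : ℕ) :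
    ∑ k ∈ Finset.range n, ENNReal.ofReal (β - α) ^ k • ((U β).compMeasureₗ ^ (k + 1)) μ
      ≤ U α ∘ₘ μ := by
  set Q := (U β).compMeasureₗ
  induction n with
  | zero => exact Measure.zero_le _
  | succ n ih =>
    calc ∑ k ∈ Finset.range (n + 1), ENNReal.ofReal (β - α) ^ k • (Q ^ (k + 1)) μ
        = Q μ + ENNReal.ofReal (β - α) •
            Q (∑ k ∈ Finset.range n, ENNReal.ofReal (β - α) ^ k • (Q ^ (k + 1)) μ) := by
          rw [map_sum, Finset.smul_sum, Finset.sum_range_succ', add_comm]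
          simp only [pow_zero, zero_add, pow_succ', mul_one, one_smul, Module.End.mul_apply,
            mul_smul, map_smul]
      _ ≤ Q μ + ENNReal.ofReal (β - α) • Q (U α ∘ₘ μ) := by
          gcongr
          exact (U β).monotone_compMeasureₗ ih
      _ = U α ∘ₘ μ := (hU.comp_eq_add_smul_comp hα hαβ μ).symm

theorem iInf_pow_apply_le (hU : IsSubMarkovResolvent U) (hα : 0 < α) (hαβ : α ≤ β)
    (ξ : Measure E) (s : Set E) :
    ⨅ n, ((ENNReal.ofReal β • (U β).compMeasureₗ) ^ n) ξ s
      ≤ (ENNReal.ofReal α • (U α ∘ₘ ξ)) s := by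
  have hβ : 0 < β := hα.trans_le hαβ
  have hγ : 0 ≤ β - α := sub_nonneg.2 hαβ
  set Q := (U β).compMeasureₗ
  set a := ENNReal.ofReal (α / β)
  set r := ENNReal.ofReal ((β - α) / β)
  have hgeom : ∑' k, a * r ^ k = 1 := by
    have h1 : 1 - r = a := by
      rw [← ENNReal.ofReal_one, ← ENNReal.ofReal_sub _ (div_nonneg hγ hβ.le)]
      congr 1
      field_simp
      ring
    rw [ENNReal.tsum_mul_left, ENNReal.tsum_geometric, h1,
      ENNReal.mul_inv_cancel (ENNReal.ofReal_pos.2 (div_pos hα hβ)).ne' ENNReal.ofReal_ne_top]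
  have hweight : ∀ k : ℕ, a * r ^ k * ((ENNReal.ofReal β • Q) ^ (k + 1)) ξ s
      = ENNReal.ofReal α * (ENNReal.ofReal (β - α) ^ k • (Q ^ (k + 1)) ξ) s := by
    intro k
    have hcoeff : a * r ^ k * ENNReal.ofReal β ^ (k + 1)
        = ENNReal.ofReal α * ENNReal.ofReal (β - α) ^ k := by
      rw [← ENNReal.ofReal_pow (div_nonneg hγ hβ.le), ← ENNReal.ofReal_pow hβ.le,
        ← ENNReal.ofReal_pow hγ, ← ENNReal.ofReal_mul (div_nonneg hα.le hβ.le),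
        ← ENNReal.ofReal_mul (by positivity), ← ENNReal.ofReal_mul hα.le]
      congr 1
      rw [div_pow, pow_succ]
      field_simp
    simp only [smul_pow, LinearMap.smul_apply, Measure.smul_apply, smul_eq_mul]
    rw [← mul_assoc (ENNReal.ofReal α), ← hcoeff]
    ring
  calc ⨅ n, ((ENNReal.ofReal β • Q) ^ n) ξ s
      = ∑' k, a * r ^ k * ⨅ n, ((ENNReal.ofReal β • Q) ^ n) ξ s := by
        rw [ENNReal.tsum_mul_right, hgeom, one_mul]
    _ ≤ ∑' k, a * r ^ k * ((ENNReal.ofReal β • Q) ^ (k + 1)) ξ s :=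
        ENNReal.tsum_le_tsum fun k => by gcongr; exact iInf_le _ (k + 1)
    _ = ENNReal.ofReal α * ∑' k, (ENNReal.ofReal (β - α) ^ k • (Q ^ (k + 1)) ξ) s := by
        simp_rw [hweight, ENNReal.tsum_mul_left]
    _ ≤ ENNReal.ofReal α * (U α ∘ₘ ξ) s := by
        gcongr
        refine ENNReal.tsum_le_of_sum_range_le fun n => ?_
        rw [← Measure.finsetSum_apply]
        exact hU.sum_smul_pow_le_comp hα hαβ ξ n s
    _ = (ENNReal.ofReal α • (U α ∘ₘ ξ)) s := by rw [Measure.smul_apply, smul_eq_mul]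

theorem iInf_pow_apply_eq_zero (hU : IsSubMarkovResolvent U) (hβ : 0 < β) {ξ : Measure E}
    (hξ : IsPurelyExcessiveMeas U ξ) {s : Set E} (hs : MeasurableSet s) :
    ⨅ n, ((ENNReal.ofReal β • (U β).compMeasureₗ) ^ n) ξ s = 0 := by
  refine le_antisymm ?_ zero_le
  rw [← hξ.2 s hs]
  refine le_iInf₂ fun α hα => ?_
  have hmin : 0 < min α β := lt_min hα hβ
  calc _ ≤ (ENNReal.ofReal (min α β) • (U (min α β) ∘ₘ ξ)) s :=
        hU.iInf_pow_apply_le hmin (min_le_right α β) ξ s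
    _ ≤ (ENNReal.ofReal α • (U α ∘ₘ ξ)) s :=
        hU.smul_comp_le_smul_comp hmin (min_le_left α β) (hξ.1 _ hmin) s

end IsSubMarkovResolvent

/-- if `ξ, η` are `U`-excessive, `ξ` purely excessive, and
`ξ - ξ∘βU_β ≤ η - η∘βU_β`, then `ξ ≤ η`. -/
theorem purelyExcessive_domination
    (U : ℝ → ProbabilityTheory.Kernel E E) (hU : IsSubMarkovResolvent U)
    (ξ η : Measure E) [SigmaFinite ξ] [SigmaFinite η]
    (hξ : IsPurelyExcessiveMeas U ξ) (hη : IsExcessiveMeas U η)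
    (β : ℝ) (hβ : 0 < β)
    (hle : ξ - ENNReal.ofReal β • ξ.bind (U β) ≤ η - ENNReal.ofReal β • η.bind (U β)) :
    ξ ≤ η := by
  have hT : Monotone (ENNReal.ofReal β • (U β).compMeasureₗ) := fun _ _ h => by
    simp only [LinearMap.smul_apply]
    gcongr
    exact (U β).monotone_compMeasureₗ h
  refine Measure.le_of_eq_add_of_iInf_pow_apply_eq_zero hT ?_ ?_ hle
    fun s hs => hU.iInf_pow_apply_eq_zero hβ hξ hs
  · exact (Measure.sub_add_cancel_of_le_of_sigmaFinite (hξ.1 β hβ)).symm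
  · exact (Measure.sub_add_cancel_of_le_of_sigmaFinite (hη β hβ)).symm
end

section
/- Let U be a sub-Markovian resolvent with initial kernel U, and g a nonnegative measurable function with g ≤ 1, Ug > 0 everywhere, and Ug ≤ 1 ξ-a.e. for a σ-finite measure ξ. Set F = [Ug < ∞]. Then U_α(1_{E∖F}) = 0 on F for every α>0, hence U(1_{E∖F}) = 0 on F, and the function f = αU_α g · 1_F + 1_{E∖F} is strictly positive with Uf ≤ Ug < ∞ on F. -/
open MeasureTheory ProbabilityTheory ENNReal Set Filter

variable {E : Type*} [MeasurableSpace E]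

/-!
Write `F = [Ug < ∞]`. The resolvent equation, iterated into a Neumann series whose
remainder vanishes for bounded `g`, expands the initial kernel as `Ug = ∑ αᵏ U_αᵏ⁺¹ g`.
Shifting this series by one term gives both `α U_α (Ug) ≤ Ug` and `U(α U_α g) ≤ Ug`.
The first inequality makes `U_α (Ug)(x)` finite for `x ∈ F`, so `U_α(x, ·)` does not
charge `[Ug = ∞]`; the second bounds `Uf` on `F`. Strict positivity of `f` on `F` holds
because `U_α g(x) = 0` forces every iterate `U_αᵏ⁺¹ g(x)` to vanish, by right continuity
of `γ ↦ U_γ`, hence `Ug(x) = 0`.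
-/
open Topology

theorem ENNReal.iSup_tsum_of_monotone {α ι : Type*} [Preorder ι] [IsDirectedOrder ι]
    {f : α → ι → ℝ≥0∞} (hf : ∀ a, Monotone (f a)) :
    ⨆ i, ∑' a, f a i = ∑' a, ⨆ i, f a i := by
  simp_rw [ENNReal.tsum_eq_iSup_sum]
  rw [iSup_comm]
  exact iSup_congr fun s => (ENNReal.finsetSum_iSup_of_monotone hf).symm

section Operators

variable {U : ℝ → ProbabilityTheory.Kernel E E} {f h : E → ℝ≥0∞} {α : ℝ}

theorem iniOp_mono (hfh : ∀ y, f y ≤ h y) (x : E) : iniOp U f x ≤ iniOp U h x :=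
  iSup₂_mono fun _ _ => lintegral_mono hfh

theorem iniOp_add_le (hf : Measurable f) (x : E) :
    iniOp U (f + h) x ≤ iniOp U f x + iniOp U h x :=
  iSup₂_le fun β hβ => (lintegral_add_left hf h).trans_le <|
    add_le_add (le_iSup₂_of_le β hβ le_rfl) (le_iSup₂_of_le β hβ le_rfl)

theorem resOp_const_mul (hf : Measurable f) (c : ℝ≥0∞) :
    resOp U α (fun y => c * f y) = fun x => c * resOp U α f x :=
  funext fun _ => lintegral_const_mul c hf

theorem IsSupermedian.resOp_indicator_eq_zero {s : E → ℝ≥0∞} (hs : IsSupermedian U s)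
    (hsm : Measurable s) (hα : 0 < α) {x : E} (hx : s x < ⊤) :
    resOp U α ({y | s y < ⊤}ᶜ.indicator 1) x = 0 := by
  have hfin : resOp U α s x ≠ ⊤ := by
    intro htop
    have := hs α hα x
    rw [htop, ENNReal.mul_top (ENNReal.ofReal_pos.2 hα).ne', top_le_iff] at this
    exact hx.ne this
  have hae : ∀ᵐ y ∂(U α x), s y < ⊤ := ae_lt_top hsm hfin
  calc resOp U α ({y | s y < ⊤}ᶜ.indicator 1) x = ∫⁻ _, 0 ∂(U α x) :=
        lintegral_congr_ae <| hae.mono fun y hy => Set.indicator_of_notMem (not_not.2 hy) _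
    _ = 0 := lintegral_zero

end Operators

namespace IsSubMarkovResolvent

variable {U : ℝ → ProbabilityTheory.Kernel E E} {f : E → ℝ≥0∞} {C : ℝ≥0∞} {α β : ℝ}

theorem measure_univ_le (hU : IsSubMarkovResolvent U) (hα : 0 < α) (x : E) :
    U α x univ ≤ (ENNReal.ofReal α)⁻¹ := by
  rw [ENNReal.le_inv_iff_mul_le, mul_comm]
  exact hU.1 α hα x

theorem isFiniteKernel (hU : IsSubMarkovResolvent U) (hα : 0 < α) : IsFiniteKernel (U α) :=
  ⟨⟨(ENNReal.ofReal α)⁻¹, ENNReal.inv_lt_top.2 (ENNReal.ofReal_pos.2 hα),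
    hU.measure_univ_le hα⟩⟩

theorem measurable_resOp (hU : IsSubMarkovResolvent U) (hα : 0 < α) (hf : Measurable f) :
    Measurable (resOp U α f) :=
  have := hU.isFiniteKernel hα
  hf.lintegral_kernel

theorem resOp_le (hU : IsSubMarkovResolvent U) (hα : 0 < α) (hfC : ∀ y, f y ≤ C) (x : E) :
    resOp U α f x ≤ C * (ENNReal.ofReal α)⁻¹ :=
  calc resOp U α f x ≤ ∫⁻ _, C ∂(U α x) := lintegral_mono hfC
    _ = C * U α x univ := lintegral_const C
    _ ≤ C * (ENNReal.ofReal α)⁻¹ := by gcongr; exact hU.measure_univ_le hα x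

theorem resOp_anti (hU : IsSubMarkovResolvent U) (hα : 0 < α) (hαβ : α ≤ β)
    (hf : Measurable f) (x : E) : resOp U β f x ≤ resOp U α f x := by
  rw [hU.2 α β hα hαβ f hf x]
  exact le_self_add

theorem measurable_iterate_resOp (hU : IsSubMarkovResolvent U) (hα : 0 < α) (hf : Measurable f) :
    ∀ n, Measurable ((resOp U α)^[n] f)
  | 0 => hf
  | n + 1 => by
    rw [Function.iterate_succ_apply']
    exact hU.measurable_resOp hα (hU.measurable_iterate_resOp hα hf n)

theorem iterate_resOp_le (hU : IsSubMarkovResolvent U) (hα : 0 < α) (hfC : ∀ y, f y ≤ C) :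
    ∀ n y, (resOp U α)^[n] f y ≤ C * (ENNReal.ofReal α)⁻¹ ^ n
  | 0, y => by simpa using hfC y
  | n + 1, y => by
    rw [Function.iterate_succ_apply', pow_succ, ← mul_assoc]
    exact hU.resOp_le hα (hU.iterate_resOp_le hα hfC n) y

theorem iterate_resOp_const_mul (hU : IsSubMarkovResolvent U) (hα : 0 < α) (hf : Measurable f)
    (c : ℝ≥0∞) :
    ∀ n, (resOp U α)^[n] (fun y => c * f y) = fun y => c * (resOp U α)^[n] f y
  | 0 => rfl
  | n + 1 => by
    rw [Function.iterate_succ_apply', Function.iterate_succ_apply',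
      hU.iterate_resOp_const_mul hα hf c n,
      resOp_const_mul (hU.measurable_iterate_resOp hα hf n)]

theorem resOp_eq_sum_add (hU : IsSubMarkovResolvent U) (hβ : 0 < β) (hβα : β ≤ α)
    (hf : Measurable f) (x : E) (n : ℕ) :
    resOp U β f x = ∑ k ∈ Finset.range n,
        ENNReal.ofReal (α - β) ^ k * (resOp U α)^[k + 1] f x
      + ENNReal.ofReal (α - β) ^ n * resOp U β ((resOp U α)^[n] f) x := by
  induction n with
  | zero => simp
  | succ n ih =>
    rw [ih, hU.2 β α hβ hβα _ (hU.measurable_iterate_resOp (hβ.trans_le hβα) hf n) x,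
      Finset.sum_range_succ, Function.iterate_succ_apply' (resOp U α) n f]
    ring

/-- The Neumann series `U_β = ∑ (α - β)ᵏ U_αᵏ⁺¹`; its remainder is `O(((α - β) / α)ⁿ)`
because `f` is bounded. -/
theorem resOp_eq_tsum (hU : IsSubMarkovResolvent U) (hβ : 0 < β) (hβα : β ≤ α)
    (hf : Measurable f) (hfC : ∀ y, f y ≤ C) (hC : C ≠ ⊤) (x : E) :
    resOp U β f x = ∑' k, ENNReal.ofReal (α - β) ^ k * (resOp U α)^[k + 1] f x := by
  have hα : 0 < α := hβ.trans_le hβα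
  set S := ∑' k, ENNReal.ofReal (α - β) ^ k * (resOp U α)^[k + 1] f x
  refine le_antisymm ?_ <| ENNReal.tsum_le_of_sum_range_le fun n => by
    rw [hU.resOp_eq_sum_add hβ hβα hf x n]
    exact le_self_add
  set r := ENNReal.ofReal (α - β) * (ENNReal.ofReal α)⁻¹ with hr_def
  have hr : r < 1 := by
    rw [hr_def, ← div_eq_mul_inv, ← ENNReal.ofReal_div_of_pos hα, ENNReal.ofReal_lt_one,
      div_lt_one hα]
    linarith
  have hbound : ∀ n, resOp U β f x ≤ S + r ^ n * (C * (ENNReal.ofReal β)⁻¹) := fun n =>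
    calc resOp U β f x = _ := hU.resOp_eq_sum_add hβ hβα hf x n
      _ ≤ S + ENNReal.ofReal (α - β) ^ n *
          (C * (ENNReal.ofReal α)⁻¹ ^ n * (ENNReal.ofReal β)⁻¹) := by
        gcongr
        · exact ENNReal.sum_le_tsum _
        · exact hU.resOp_le hβ (hU.iterate_resOp_le hα hfC n) x
      _ = S + r ^ n * (C * (ENNReal.ofReal β)⁻¹) := by rw [mul_pow]; ring
  have hlim : Tendsto (fun n => S + r ^ n * (C * (ENNReal.ofReal β)⁻¹)) atTop (𝓝 S) := by
    simpa using tendsto_const_nhds.add <|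
      ENNReal.Tendsto.mul_const (ENNReal.tendsto_pow_atTop_nhds_zero_of_lt_one hr) <| Or.inr <|
        ENNReal.mul_ne_top hC (ENNReal.inv_ne_top.2 (ENNReal.ofReal_pos.2 hβ).ne')
  exact ge_of_tendsto hlim (Eventually.of_forall hbound)

theorem iniOp_eq_iSup_nat (hU : IsSubMarkovResolvent U) (hα : 0 < α) (hf : Measurable f) (x : E) :
    iniOp U f x = ⨆ n : ℕ, resOp U (α / (n + 1)) f x := by
  refine le_antisymm (iSup₂_le fun β hβ => ?_)
    (iSup_le fun n => le_iSup₂_of_le (α / (n + 1)) (by positivity) le_rfl)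
  obtain ⟨n, hn⟩ := exists_nat_one_div_lt (div_pos hβ hα)
  have hle : α / (n + 1) ≤ β := by
    rw [lt_div_iff₀ hα] at hn
    linarith [show α / (n + 1) = 1 / (n + 1) * α by ring]
  exact le_iSup_of_le n (hU.resOp_anti (by positivity) hle hf x)

theorem iniOp_eq_tsum (hU : IsSubMarkovResolvent U) (hα : 0 < α) (hf : Measurable f)
    (hfC : ∀ y, f y ≤ C) (hC : C ≠ ⊤) (x : E) :
    iniOp U f x = ∑' k, ENNReal.ofReal α ^ k * (resOp U α)^[k + 1] f x := by
  set c : ℕ → ℝ≥0∞ := fun n => ENNReal.ofReal (α - α / (n + 1))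
  have hc_mono : Monotone c := fun m n hmn => by
    have : α / (n + 1) ≤ α / (m + 1) := by gcongr
    exact ENNReal.ofReal_le_ofReal (by linarith)
  have hc_sup : ⨆ n, c n = ENNReal.ofReal α := by
    refine iSup_eq_of_tendsto hc_mono (ENNReal.tendsto_ofReal ?_)
    simpa using tendsto_const_nhds.sub (tendsto_const_div_atTop_nhds_zero_nat α |>.comp
      (tendsto_add_atTop_nat 1) |>.congr fun n => by simp)
  rw [hU.iniOp_eq_iSup_nat hα hf x]
  rw [iSup_congr fun n : ℕ => hU.resOp_eq_tsum (β := α / (n + 1)) (by positivity)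
    (div_le_self hα.le (by simp)) hf hfC hC x, ENNReal.iSup_tsum_of_monotone]
  · simp_rw [← ENNReal.iSup_mul, ← ENNReal.iSup_pow]
    rw [hc_sup]
  · exact fun k m n hmn => by gcongr

theorem measurable_iniOp (hU : IsSubMarkovResolvent U) (hf : Measurable f) :
    Measurable (iniOp U f) := by
  simp_rw [funext (hU.iniOp_eq_iSup_nat one_pos hf)]
  exact .iSup fun n => hU.measurable_resOp (by positivity) hf

theorem tsum_succ_le_iniOp (hU : IsSubMarkovResolvent U) (hα : 0 < α) (hf : Measurable f)
    (hfC : ∀ y, f y ≤ C) (hC : C ≠ ⊤) (x : E) :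
    ∑' k, ENNReal.ofReal α ^ (k + 1) * (resOp U α)^[k + 2] f x ≤ iniOp U f x := by
  rw [hU.iniOp_eq_tsum hα hf hfC hC x]
  exact ENNReal.tsum_comp_le_tsum_of_injective (add_left_injective 1)
    fun k => ENNReal.ofReal α ^ k * (resOp U α)^[k + 1] f x

theorem isSupermedian_iniOp (hU : IsSubMarkovResolvent U) (hf : Measurable f)
    (hfC : ∀ y, f y ≤ C) (hC : C ≠ ⊤) : IsSupermedian U (iniOp U f) := by
  intro α hα x
  have hmeas := hU.measurable_iterate_resOp hα hf
  calc ENNReal.ofReal α * resOp U α (iniOp U f) x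
      = ENNReal.ofReal α * ∑' k, ∫⁻ y, ENNReal.ofReal α ^ k * (resOp U α)^[k + 1] f y
          ∂(U α x) := by
        rw [← lintegral_tsum fun k => ((hmeas (k + 1)).const_mul _).aemeasurable]
        simp_rw [resOp, hU.iniOp_eq_tsum hα hf hfC hC]
    _ = ∑' k, ENNReal.ofReal α ^ (k + 1) * (resOp U α)^[k + 2] f x := by
        rw [← ENNReal.tsum_mul_left]
        congr 1 with k
        rw [lintegral_const_mul _ (hmeas (k + 1)), pow_succ]
        simp only [Function.iterate_succ_apply' (resOp U α) (k + 1), resOp]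
        ring
    _ ≤ iniOp U f x := hU.tsum_succ_le_iniOp hα hf hfC hC x

theorem iniOp_ofReal_mul_resOp_le (hU : IsSubMarkovResolvent U) (hα : 0 < α) (hf : Measurable f)
    (hfC : ∀ y, f y ≤ C) (hC : C ≠ ⊤) (x : E) :
    iniOp U (fun y => ENNReal.ofReal α * resOp U α f y) x ≤ iniOp U f x := by
  have hbound : ∀ y, ENNReal.ofReal α * resOp U α f y
      ≤ ENNReal.ofReal α * (C * (ENNReal.ofReal α)⁻¹) := fun y => by
    gcongr; exact hU.resOp_le hα hfC y
  have hfin : ENNReal.ofReal α * (C * (ENNReal.ofReal α)⁻¹) ≠ ⊤ :=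
    ENNReal.mul_ne_top ENNReal.ofReal_ne_top
      (ENNReal.mul_ne_top hC (ENNReal.inv_ne_top.2 (ENNReal.ofReal_pos.2 hα).ne'))
  rw [hU.iniOp_eq_tsum hα ((hU.measurable_resOp hα hf).const_mul _) hbound hfin x]
  simp_rw [hU.iterate_resOp_const_mul hα (hU.measurable_resOp hα hf)]
  refine le_of_eq_of_le (tsum_congr fun k => ?_) (hU.tsum_succ_le_iniOp hα hf hfC hC x)
  rw [← Function.iterate_succ_apply (resOp U α) (k + 1), pow_succ]
  ring

/-- Right continuity `U_α f = sup_{γ ↓ α} U_γ f`: by the resolvent equation the gap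
`U_α f - U_γ f = (γ - α) U_α U_γ f` is `O(γ - α)` for bounded `f`. -/
theorem resOp_eq_iSup_nat (hU : IsSubMarkovResolvent U) (hα : 0 < α) (hf : Measurable f)
    (hfC : ∀ y, f y ≤ C) (hC : C ≠ ⊤) (x : E) :
    resOp U α f x = ⨆ n : ℕ, resOp U (α + 1 / (n + 1)) f x := by
  have hle : ∀ n : ℕ, α ≤ α + 1 / (n + 1) := fun n => le_add_of_nonneg_right (by positivity)
  refine le_antisymm ?_ (iSup_le fun n => hU.resOp_anti hα (hle n) hf x)
  set S := ⨆ n : ℕ, resOp U (α + 1 / (n + 1)) f x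
  set B := C * (ENNReal.ofReal α)⁻¹ * (ENNReal.ofReal α)⁻¹
  have hB : B ≠ ⊤ := by
    have := ENNReal.inv_ne_top.2 (ENNReal.ofReal_pos.2 hα).ne'
    exact ENNReal.mul_ne_top (ENNReal.mul_ne_top hC this) this
  have hbound : ∀ n : ℕ, resOp U α f x ≤ S + ENNReal.ofReal (1 / (n + 1)) * B := fun n => by
    rw [hU.2 α _ hα (hle n) f hf x, add_sub_cancel_left]
    gcongr
    · exact le_iSup (fun n : ℕ => resOp U (α + 1 / (n + 1)) f x) n
    · exact hU.resOp_le hα (fun z => (hU.resOp_anti hα (hle n) hf z).trans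
        (hU.resOp_le hα hfC z)) x
  have hlim : Tendsto (fun n : ℕ => S + ENNReal.ofReal (1 / (n + 1)) * B) atTop (𝓝 S) := by
    simpa using tendsto_const_nhds.add <|
      ENNReal.Tendsto.mul_const
        (ENNReal.tendsto_ofReal tendsto_one_div_add_atTop_nhds_zero_nat) (Or.inr hB)
  exact ge_of_tendsto hlim (Eventually.of_forall hbound)

theorem resOp_resOp_eq_zero (hU : IsSubMarkovResolvent U) (hα : 0 < α) (hf : Measurable f)
    (hfC : ∀ y, f y ≤ C) (hC : C ≠ ⊤) {x : E} (h0 : resOp U α f x = 0) :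
    resOp U α (resOp U α f) x = 0 := by
  have hγ : ∀ n : ℕ, 0 < α + 1 / (n + 1) := fun n => by positivity
  have hzero : ∀ n : ℕ, resOp U α (resOp U (α + 1 / (n + 1)) f) x = 0 := fun n => by
    have h := hU.2 α (α + 1 / (n + 1)) hα (le_add_of_nonneg_right (by positivity)) f hf x
    rw [h0, eq_comm, add_eq_zero, add_sub_cancel_left, mul_eq_zero] at h
    exact h.2.resolve_left (ENNReal.ofReal_pos.2 (by positivity)).ne'
  have hmono : Monotone fun n : ℕ => resOp U (α + 1 / (n + 1)) f := fun m n hmn y =>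
    hU.resOp_anti (hγ n) (by gcongr) hf y
  calc resOp U α (resOp U α f) x
      = resOp U α (fun y => ⨆ n : ℕ, resOp U (α + 1 / (n + 1)) f y) x := by
        simp_rw [← hU.resOp_eq_iSup_nat hα hf hfC hC]
    _ = ⨆ n : ℕ, resOp U α (resOp U (α + 1 / (n + 1)) f) x :=
        lintegral_iSup (fun n => hU.measurable_resOp (hγ n) hf) hmono
    _ = 0 := ENNReal.iSup_eq_zero.2 hzero

theorem iterate_resOp_eq_zero (hU : IsSubMarkovResolvent U) (hα : 0 < α) (hf : Measurable f)
    (hfC : ∀ y, f y ≤ C) (hC : C ≠ ⊤) {x : E} (h0 : resOp U α f x = 0) :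
    ∀ k, (resOp U α)^[k + 1] f x = 0
  | 0 => h0
  | k + 1 => by
    have hk := hU.iterate_resOp_eq_zero hα hf hfC hC h0 k
    rw [Function.iterate_succ_apply', Function.iterate_succ_apply']
    rw [Function.iterate_succ_apply'] at hk
    exact hU.resOp_resOp_eq_zero hα (hU.measurable_iterate_resOp hα hf k)
      (hU.iterate_resOp_le hα hfC k)
      (ENNReal.mul_ne_top hC (ENNReal.pow_ne_top (ENNReal.inv_ne_top.2
        (ENNReal.ofReal_pos.2 hα).ne'))) hk

theorem iniOp_eq_zero_of_resOp_eq_zero (hU : IsSubMarkovResolvent U) (hα : 0 < α)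
    (hf : Measurable f) (hfC : ∀ y, f y ≤ C) (hC : C ≠ ⊤) {x : E}
    (h0 : resOp U α f x = 0) : iniOp U f x = 0 := by
  simp [hU.iniOp_eq_tsum hα hf hfC hC x, hU.iterate_resOp_eq_zero hα hf hfC hC h0]

end IsSubMarkovResolvent

theorem finiteness_set_absorbing_general
    (U : ℝ → ProbabilityTheory.Kernel E E) (hU : IsSubMarkovResolvent U)
    (g : E → ℝ≥0∞) (hg : Measurable g) (hg1 : ∀ x, g x ≤ 1)
    (hpos : ∀ x, 0 < iniOp U g x)
    (α : ℝ) (hα : 0 < α) :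
    (∀ α' : ℝ, 0 < α' → ∀ x ∈ {y | iniOp U g y < ⊤},
      resOp U α' ({y | iniOp U g y < ⊤}ᶜ.indicator 1) x = 0) ∧
    (∀ x ∈ {y | iniOp U g y < ⊤},
      iniOp U ({y | iniOp U g y < ⊤}ᶜ.indicator 1) x = 0) ∧
    (∀ x, 0 < ENNReal.ofReal α * resOp U α g x * {y | iniOp U g y < ⊤}.indicator 1 x
      + ({y | iniOp U g y < ⊤}ᶜ.indicator 1 x)) ∧
    (∀ x ∈ {y | iniOp U g y < ⊤},
      iniOp U (fun z => ENNReal.ofReal α * resOp U α g z * {y | iniOp U g y < ⊤}.indicator 1 z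
        + {y | iniOp U g y < ⊤}ᶜ.indicator 1 z) x ≤ iniOp U g x ∧ iniOp U g x < ⊤) := by
  set F := {y | iniOp U g y < ⊤}
  have hres : ∀ α' : ℝ, 0 < α' → ∀ x ∈ F, resOp U α' (Fᶜ.indicator 1) x = 0 :=
    fun α' hα' x hx => (hU.isSupermedian_iniOp hg hg1 one_ne_top).resOp_indicator_eq_zero
      (hU.measurable_iniOp hg) hα' hx
  have hini : ∀ x ∈ F, iniOp U (Fᶜ.indicator 1) x = 0 :=
    fun x hx => ENNReal.iSup_eq_zero.2 fun α' =>
      ENNReal.iSup_eq_zero.2 fun hα' => hres α' hα' x hx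
  refine ⟨hres, hini, fun x => ?_, fun x hx => ⟨?_, hx⟩⟩
  · by_cases hx : x ∈ F
    · have hUα : resOp U α g x ≠ 0 := fun h0 =>
        (hpos x).ne' (hU.iniOp_eq_zero_of_resOp_eq_zero hα hg hg1 one_ne_top h0)
      simpa [hx, hα] using pos_iff_ne_zero.2 hUα
    · simp [hx]
  · calc _ ≤ iniOp U ((fun z => ENNReal.ofReal α * resOp U α g z) + Fᶜ.indicator 1) x :=
          iniOp_mono (fun z => add_le_add_left (mul_le_of_le_one_right' <|
            Set.indicator_le_self' (fun _ _ => zero_le_one) z) _) x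
      _ ≤ iniOp U (fun z => ENNReal.ofReal α * resOp U α g z) x
          + iniOp U (Fᶜ.indicator 1) x :=
          iniOp_add_le ((hU.measurable_resOp hα hg).const_mul _) x
      _ ≤ iniOp U g x := by
          rw [hini x hx, add_zero]
          exact hU.iniOp_ofReal_mul_resOp_le hα hg hg1 one_ne_top x

/-- STATEMENT 12 (Proposition A1, 5) ⇒ 3)): for `g ≤ 1` with `Ug > 0` everywhere and
`Ug ≤ 1` ξ-a.e., the set `F = [Ug < ∞]` satisfies `U_α(1_{E∖F}) = 0` on `F` for every
`α > 0`, hence `U(1_{E∖F}) = 0` on `F`, and `f = α U_α g · 1_F + 1_{E∖F}` is strictly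
positive with `Uf ≤ Ug < ∞` on `F`. -/
theorem finiteness_set_absorbing
    (U : ℝ → ProbabilityTheory.Kernel E E) (hU : IsSubMarkovResolvent U)
    (ξ : Measure E) [SigmaFinite ξ]
    (g : E → ℝ≥0∞) (hg : Measurable g) (hg1 : ∀ x, g x ≤ 1)
    (hpos : ∀ x, 0 < iniOp U g x) (hae : ∀ᵐ x ∂ξ, iniOp U g x ≤ 1)
    (α : ℝ) (hα : 0 < α) :
    (∀ α' : ℝ, 0 < α' → ∀ x ∈ {y | iniOp U g y < ⊤},
      resOp U α' ({y | iniOp U g y < ⊤}ᶜ.indicator 1) x = 0) ∧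
    (∀ x ∈ {y | iniOp U g y < ⊤},
      iniOp U ({y | iniOp U g y < ⊤}ᶜ.indicator 1) x = 0) ∧
    (∀ x, 0 < ENNReal.ofReal α * resOp U α g x * {y | iniOp U g y < ⊤}.indicator 1 x
      + ({y | iniOp U g y < ⊤}ᶜ.indicator 1 x)) ∧
    (∀ x ∈ {y | iniOp U g y < ⊤},
      iniOp U (fun z => ENNReal.ofReal α * resOp U α g z * {y | iniOp U g y < ⊤}.indicator 1 z
        + {y | iniOp U g y < ⊤}ᶜ.indicator 1 z) x ≤ iniOp U g x ∧ iniOp U g x < ⊤) :=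
  finiteness_set_absorbing_general U hU g hg hg1 hpos α hα
end
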